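/- Let G be a finite group acting on an abelian variety A by automorphisms fixing the origin such that A/G is smooth and of Picard number 1. Then the analytic representation of G on T_0(A) is irreducible. -/

import Mathlib

noncomputable section

abbrev Vn (n : ℕ) := Fin n → ℂ

/-- `Λ` is a lattice in `ℂ^n`: a discrete subgroup spanning `ℂ^n` over `ℝ`. -/
def IsLattice {n : ℕ} (Λ : AddSubgroup (Vn n)) : Prop :=
  DiscreteTopology Λ ∧ Submodule.span ℝ (Λ : Set (Vn n)) = ⊤

/-- A pseudoreflection: a linear automorphism whose fixed subspace is a hyperplane. -/
def IsPseudoreflection {n : ℕ} (g : Vn n ≃ₗ[ℂ] Vn n) : Prop :=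
  Module.finrank ℂ
    (LinearMap.range ((1 : Vn n →ₗ[ℂ] Vn n) - (g : Vn n →ₗ[ℂ] Vn n))) = 1

/-- The automorphism of `A = ℂ^n ⧸ Λ` induced by `g` fixes the point `x`. -/
def FixesPt {n : ℕ} (Λ : AddSubgroup (Vn n)) (g : Vn n ≃ₗ[ℂ] Vn n)
    (x : Vn n ⧸ Λ) : Prop :=
  ∃ v : Vn n, QuotientAddGroup.mk' Λ v = x ∧ g v - v ∈ Λ

/-- Smoothness of the quotient `A/G` of the abelian variety `A = ℂ^n ⧸ Λ` by the finite
group `G`, encoded via the Chevalley–Shephard–Todd criterion: the stabilizer of every point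
of `A` is generated by the pseudoreflections it contains. -/
def SmoothQuotient {n : ℕ} (Λ : AddSubgroup (Vn n))
    (G : Set (Vn n ≃ₗ[ℂ] Vn n)) : Prop :=
  ∀ x : Vn n ⧸ Λ, ∀ g ∈ G, FixesPt Λ g x →
    g ∈ Subgroup.closure {h : Vn n ≃ₗ[ℂ] Vn n | h ∈ G ∧ FixesPt Λ h x ∧ IsPseudoreflection h}

/-- A real alternating form `E` on `ℂ^n` representing a Néron–Severi class of `ℂ^n ⧸ Λ`:
`E` is alternating, compatible with the complex structure, and integral on the lattice. -/
def IsNSClass {n : ℕ} (Λ : AddSubgroup (Vn n))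
    (E : Vn n →ₗ[ℝ] Vn n →ₗ[ℝ] ℝ) : Prop :=
  (∀ x y : Vn n, E x y = - E y x) ∧
  (∀ x y : Vn n, E ((Complex.I : ℂ) • x) ((Complex.I : ℂ) • y) = E x y) ∧
  (∀ l ∈ Λ, ∀ m ∈ Λ, ∃ k : ℤ, E l m = (k : ℝ))

/-- `E` is invariant under the group `G`. -/
def GInvariantForm {n : ℕ} (G : Subgroup (Vn n ≃ₗ[ℂ] Vn n))
    (E : Vn n →ₗ[ℝ] Vn n →ₗ[ℝ] ℝ) : Prop :=
  ∀ g ∈ G, ∀ x y : Vn n, E (g x) (g y) = E x y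

/-!
Let `p` be a `G`-equivariant projection onto a `G`-stable subspace `W` (Maschke). If a
`G`-equivariant endomorphism `f` is defined over `ℚ`, an integral multiple of `f` preserves `Λ`,
so pulling the invariant polarization `E` back along it gives a `G`-invariant Néron–Severi class.
By Picard number 1 this class is a multiple of `E`; it is degenerate on `ker f`, and `E` is
positive definite, so `f` is either injective or zero.

Applied to `∑ g`, which kills every `x - g x`, this shows that `G ≠ 1` has no nonzero invariant
vectors. For a pseudoreflection `g`, `p` commutes with the rank-one map `1 - g` and hence acts on
its range by `0` or `1`, so `p` is rational on `(1 - g) Λ`. Smoothness at the origin says that `G`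
is generated by pseudoreflections, so `p` is rational on every `(1 - g) Λ`, and these span `Λ ⊗ ℚ`
because `|G| • x = ∑ (x - g x)`. Thus `p` is defined over `ℚ`, so `W = 0` or `W = ℂⁿ`.
-/

section RationalSpan

variable {V : Type*} [AddCommGroup V] [Module ℚ V]

theorem exists_nsmul_mem_of_mem_span_rat {Λ : Submodule ℤ V} {x : V}
    (hx : x ∈ Submodule.span ℚ (Λ : Set V)) : ∃ N : ℕ, 0 < N ∧ N • x ∈ Λ := by
  induction hx using Submodule.span_induction with
  | mem x hx => exact ⟨1, one_pos, by rwa [one_nsmul]⟩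
  | zero => exact ⟨1, one_pos, by simp⟩
  | add x y _ _ hx hy =>
    obtain ⟨N₁, hN₁, hx⟩ := hx
    obtain ⟨N₂, hN₂, hy⟩ := hy
    refine ⟨N₁ * N₂, Nat.mul_pos hN₁ hN₂, ?_⟩
    rw [smul_add, mul_nsmul, mul_nsmul']
    exact Λ.add_mem (Λ.smul_of_tower_mem _ hx) (Λ.smul_of_tower_mem _ hy)
  | smul q x _ hx =>
    obtain ⟨N, hN, hx⟩ := hx
    refine ⟨q.den * N, Nat.mul_pos q.den_pos hN, ?_⟩
    have : (q.den * N) • q • x = q.num • N • x := by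
      rw [← Nat.cast_smul_eq_nsmul ℚ, ← Nat.cast_smul_eq_nsmul ℚ N, ← Int.cast_smul_eq_zsmul ℚ,
        smul_smul, smul_smul, Nat.cast_mul, mul_right_comm, Rat.den_mul_eq_num]
    rw [this]
    exact Λ.smul_mem _ hx

theorem exists_nsmul_mem_of_fg_of_le_span_rat {Λ H : Submodule ℤ V} (hH : H.FG)
    (hHΛ : (H : Set V) ⊆ Submodule.span ℚ (Λ : Set V)) :
    ∃ N : ℕ, 0 < N ∧ ∀ x ∈ H, N • x ∈ Λ := by
  obtain ⟨s, rfl⟩ := hH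
  choose N hN hNs using fun x : s =>
    exists_nsmul_mem_of_mem_span_rat (hHΛ (Submodule.subset_span x.2))
  refine ⟨∏ x : s, N x, Finset.prod_pos fun x _ => hN x, fun x hx => ?_⟩
  suffices Submodule.span ℤ (s : Set V) ≤ Λ.comap ((∏ x : s, N x) • LinearMap.id) from this hx
  rw [Submodule.span_le]
  intro x hx
  obtain ⟨c, hc⟩ := Finset.dvd_prod_of_mem N (Finset.mem_univ ⟨x, hx⟩)
  show (∏ x : s, N x) • x ∈ Λ
  rw [hc, mul_nsmul]
  exact Λ.smul_of_tower_mem c (hNs ⟨x, hx⟩)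

end RationalSpan

theorem mul_eq_right_or_mul_eq_zero_of_finrank_range_eq_one {K V : Type*} [Field K]
    [AddCommGroup V] [Module K V] {p q : Module.End K V} (hp : IsIdempotentElem p)
    (hpq : Commute p q) (hq : Module.finrank K (LinearMap.range q) = 1) :
    p * q = q ∨ p * q = 0 := by
  obtain ⟨⟨v, hv⟩, hv0, hspan⟩ := finrank_eq_one_iff'.1 hq
  have hline : ∀ w ∈ LinearMap.range q, ∃ c : K, c • v = w := fun w hw =>
    (hspan ⟨w, hw⟩).imp fun c hc => congrArg Subtype.val hc
  have hne : v ≠ 0 := fun h => hv0 (Subtype.ext h)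
  obtain ⟨u, rfl⟩ := hv
  obtain ⟨c, hc⟩ := hline (p (q u)) ⟨p u, (LinearMap.congr_fun hpq.eq u).symm⟩
  have hpq_eq : p * q = c • q := by
    ext x
    obtain ⟨d, hd⟩ := hline (q x) ⟨x, rfl⟩
    simp only [Module.End.mul_apply, LinearMap.smul_apply, ← hd, map_smul, ← hc]
    exact smul_comm d c (q u)
  have hcc : IsIdempotentElem c := by
    have h := LinearMap.congr_fun hp.eq (q u)
    simp only [Module.End.mul_apply, ← hc, map_smul, smul_smul] at h
    exact smul_left_injective K hne h
  rcases IsIdempotentElem.iff_eq_zero_or_one.1 hcc with rfl | rfl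
  · exact .inr (by simpa using hpq_eq)
  · exact .inl (by simpa using hpq_eq)

theorem sub_smul_mem_of_mem_closure {H V : Type*} [Group H] [AddCommGroup V]
    [DistribMulAction H V] {R : Set H} {Λ S : AddSubgroup V}
    (hΛ : ∀ k ∈ Subgroup.closure R, ∀ x ∈ Λ, k • x ∈ Λ)
    (hR : ∀ r ∈ R, ∀ x ∈ Λ, x - r • x ∈ S) :
    ∀ k ∈ Subgroup.closure R, ∀ x ∈ Λ, x - k • x ∈ S := by
  intro k hk
  induction hk using Subgroup.closure_induction with
  | mem r hr => exact hR r hr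
  | one => simp
  | mul g h hg hh ihg ihh =>
    intro x hx
    rw [mul_smul, show x - g • h • x = (x - h • x) + (h • x - g • h • x) by abel]
    exact S.add_mem (ihh x hx) (ihg _ (hΛ h hh x hx))
  | inv g hg ihg =>
    intro x hx
    have hgx := hΛ g⁻¹ (inv_mem hg) x hx
    rw [show x - g⁻¹ • x = -(g⁻¹ • x - g • g⁻¹ • x) by simp]
    exact S.neg_mem (ihg _ hgx)

theorem exists_isIdempotentElem_range_eq_commute {K V : Type*} [Field K] [CharZero K]
    [AddCommGroup V] [Module K V] (G : Subgroup (V ≃ₗ[K] V)) [Finite G] (W : Submodule K V)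
    (hW : ∀ g ∈ G, ∀ w ∈ W, g w ∈ W) :
    ∃ p : Module.End K V, IsIdempotentElem p ∧ LinearMap.range p = W ∧
      ∀ g ∈ G, Commute p (g : Module.End K V) := by
  let ρ : Representation K G V :=
    LinearEquiv.automorphismGroup.toLinearMapMonoidHom.comp G.subtype
  obtain ⟨U, hWU⟩ := exists_isCompl (⟨W, fun g _ hw => hW g g.2 _ hw⟩ : Subrepresentation ρ)
  have hWU : IsCompl W U.toSubmodule :=
    ⟨disjoint_iff.2 (congrArg Subrepresentation.toSubmodule (disjoint_iff.1 hWU.1)),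
      codisjoint_iff.2 (congrArg Subrepresentation.toSubmodule (codisjoint_iff.1 hWU.2))⟩
  have hp := Submodule.isIdempotentElem_projection hWU
  refine ⟨_, hp, Submodule.range_projection hWU, fun g hg =>
    (LinearMap.IsIdempotentElem.commute_iff hp).2 ⟨?_, ?_⟩⟩
  · rw [Submodule.range_projection]
    exact hW g hg
  · rw [Submodule.ker_projection]
    exact U.apply_mem_toSubmodule ⟨g, hg⟩

theorem IsLattice.fg_toIntSubmodule {n : ℕ} {Λ : AddSubgroup (Vn n)} (hΛ : IsLattice Λ) :
    (AddSubgroup.toIntSubmodule Λ).FG := by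
  have : DiscreteTopology (AddSubgroup.toIntSubmodule Λ) := hΛ.1
  have : IsZLattice ℝ (AddSubgroup.toIntSubmodule Λ) := ⟨hΛ.2⟩
  exact Module.Finite.iff_fg.1 (ZLattice.module_finite ℝ _)

section Forms

variable {n : ℕ} {E : Vn n →ₗ[ℝ] Vn n →ₗ[ℝ] ℝ} {φ : Module.End ℂ (Vn n)}

theorem IsNSClass.compl₁₂ {Λ : AddSubgroup (Vn n)} (hE : IsNSClass Λ E)
    (hφ : ∀ l ∈ Λ, φ l ∈ Λ) :
    IsNSClass Λ (E.compl₁₂ (φ.restrictScalars ℝ) (φ.restrictScalars ℝ)) := by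
  refine ⟨fun x y => hE.1 _ _, fun x y => ?_, fun l hl m hm => hE.2.2 _ (hφ l hl) _ (hφ m hm)⟩
  simpa only [LinearMap.compl₁₂_apply, LinearMap.coe_restrictScalars, map_smul] using
    hE.2.1 (φ x) (φ y)

theorem GInvariantForm.compl₁₂ {G : Subgroup (Vn n ≃ₗ[ℂ] Vn n)} (hE : GInvariantForm G E)
    (hφ : ∀ g ∈ G, Commute φ (g : Module.End ℂ (Vn n))) :
    GInvariantForm G (E.compl₁₂ (φ.restrictScalars ℝ) (φ.restrictScalars ℝ)) := by
  intro g hg x y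
  have hcomm : ∀ z, φ (g z) = g (φ z) := LinearMap.congr_fun (hφ g hg).eq
  simp only [LinearMap.compl₁₂_apply, LinearMap.coe_restrictScalars, hcomm, hE g hg]

end Forms

section Picard

variable {n : ℕ} {Λ : AddSubgroup (Vn n)} {G : Subgroup (Vn n ≃ₗ[ℂ] Vn n)}
  {E₀ E : Vn n →ₗ[ℝ] Vn n →ₗ[ℝ] ℝ}

theorem eq_zero_of_apply_eq_zero_of_forall_eq_smul
    (hE₀ : ∀ E : Vn n →ₗ[ℝ] Vn n →ₗ[ℝ] ℝ, IsNSClass Λ E → GInvariantForm G E →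
      ∃ q : ℚ, E = (q : ℝ) • E₀)
    (hE : IsNSClass Λ E) (hEG : GInvariantForm G E) {E' : Vn n →ₗ[ℝ] Vn n →ₗ[ℝ] ℝ}
    (hE' : IsNSClass Λ E') (hE'G : GInvariantForm G E') {x y : Vn n}
    (hxy : E x y ≠ 0) (hxy' : E' x y = 0) : E' = 0 := by
  obtain ⟨q, rfl⟩ := hE₀ E hE hEG
  obtain ⟨q', rfl⟩ := hE₀ E' hE' hE'G
  simp only [LinearMap.smul_apply, smul_eq_mul, ne_eq, mul_eq_zero, not_or, Rat.cast_eq_zero,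
    smul_eq_zero] at hxy hxy' ⊢
  tauto

theorem eq_zero_of_commute_of_apply_eq_zero (hΛ : IsLattice Λ)
    (hE₀ : ∀ E : Vn n →ₗ[ℝ] Vn n →ₗ[ℝ] ℝ, IsNSClass Λ E → GInvariantForm G E →
      ∃ q : ℚ, E = (q : ℝ) • E₀)
    (hE : IsNSClass Λ E) (hEG : GInvariantForm G E)
    (hEpos : ∀ x : Vn n, x ≠ 0 → 0 < E ((Complex.I : ℂ) • x) x)
    {f : Module.End ℂ (Vn n)} (hfG : ∀ g ∈ G, Commute f (g : Module.End ℂ (Vn n)))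
    (hfΛ : ∀ l ∈ Λ, f l ∈ Submodule.span ℚ (Λ : Set (Vn n)))
    {w : Vn n} (hw : w ≠ 0) (hfw : f w = 0) : f = 0 := by
  obtain ⟨N, hN, hNΛ⟩ := exists_nsmul_mem_of_fg_of_le_span_rat
    (Λ := AddSubgroup.toIntSubmodule Λ) (hΛ.fg_toIntSubmodule.map (f.restrictScalars ℤ))
    (by rintro _ ⟨l, hl, rfl⟩; exact hfΛ l hl)
  have hφΛ : ∀ l ∈ Λ, (N • f) l ∈ Λ := fun l hl => hNΛ _ ⟨l, hl, rfl⟩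
  have hφG : ∀ g ∈ G, Commute (N • f) (g : Module.End ℂ (Vn n)) :=
    fun g hg => (hfG g hg).smul_left N
  have hpull := eq_zero_of_apply_eq_zero_of_forall_eq_smul hE₀ hE hEG (hE.compl₁₂ hφΛ)
    (hEG.compl₁₂ hφG) (hEpos w hw).ne' (by simp [hfw])
  refine LinearMap.ext fun x => by_contra fun hx => ?_
  have hpos := hEpos (N • f x) (smul_ne_zero hN.ne' hx)
  have hzero := LinearMap.congr_fun₂ hpull ((Complex.I : ℂ) • x) x
  simp only [LinearMap.compl₁₂_apply, LinearMap.coe_restrictScalars, map_smul,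
    LinearMap.smul_apply, LinearMap.zero_apply] at hzero
  exact hpos.ne' hzero

end Picard

theorem sum_apply_eq_zero {n : ℕ} {Λ : AddSubgroup (Vn n)} {G : Subgroup (Vn n ≃ₗ[ℂ] Vn n)}
    [Fintype G] (hΛ : IsLattice Λ) (hG : G ≠ ⊥) (hGΛ : ∀ g ∈ G, ∀ v ∈ Λ, g v ∈ Λ)
    {E₀ E : Vn n →ₗ[ℝ] Vn n →ₗ[ℝ] ℝ}
    (hE₀ : ∀ E : Vn n →ₗ[ℝ] Vn n →ₗ[ℝ] ℝ, IsNSClass Λ E → GInvariantForm G E →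
      ∃ q : ℚ, E = (q : ℝ) • E₀)
    (hE : IsNSClass Λ E) (hEG : GInvariantForm G E)
    (hEpos : ∀ x : Vn n, x ≠ 0 → 0 < E ((Complex.I : ℂ) • x) x) (x : Vn n) :
    ∑ g : G, (g : Vn n ≃ₗ[ℂ] Vn n) x = 0 := by
  let σ : Module.End ℂ (Vn n) := ∑ g : G, ((g : Vn n ≃ₗ[ℂ] Vn n) : Module.End ℂ (Vn n))
  have hσ_apply : ∀ y, σ y = ∑ g : G, (g : Vn n ≃ₗ[ℂ] Vn n) y := fun y => by
    simp only [σ, LinearMap.sum_apply, LinearEquiv.coe_coe]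
  have hσ_right : ∀ g ∈ G, σ * g = σ := fun g hg => by
    rw [Finset.sum_mul]
    exact Fintype.sum_equiv (Equiv.mulRight ⟨g, hg⟩) _ _ fun k => rfl
  have hσ_left : ∀ g ∈ G, (g : Module.End ℂ (Vn n)) * σ = σ := fun g hg => by
    rw [Finset.mul_sum]
    exact Fintype.sum_equiv (Equiv.mulLeft ⟨g, hg⟩) _ _ fun k => rfl
  obtain ⟨⟨g, hg⟩, hg1⟩ := (Subgroup.ne_bot_iff_exists_ne_one).1 hG
  obtain ⟨y, hy⟩ : ∃ y, g y ≠ y := by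
    by_contra! h
    exact hg1 (Subtype.ext (LinearEquiv.ext h))
  have hσΛ : ∀ l ∈ Λ, σ l ∈ Λ := fun l hl => by
    rw [hσ_apply]
    exact Λ.sum_mem fun g _ => hGΛ g g.2 l hl
  have hσy : σ (y - g y) = 0 := by
    rw [map_sub, sub_eq_zero]
    exact (LinearMap.congr_fun (hσ_right g hg) y).symm
  have hσ : σ = 0 := eq_zero_of_commute_of_apply_eq_zero hΛ hE₀ hE hEG hEpos
    (fun g hg => (hσ_right g hg).trans (hσ_left g hg).symm)
    (fun l hl => Submodule.subset_span (hσΛ l hl)) (sub_ne_zero.2 hy.symm) hσy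
  simpa [hσ_apply] using LinearMap.congr_fun hσ x

theorem SmoothQuotient.mem_closure_pseudoreflections {n : ℕ} {Λ : AddSubgroup (Vn n)}
    {G : Set (Vn n ≃ₗ[ℂ] Vn n)} (hG : SmoothQuotient Λ G) {g : Vn n ≃ₗ[ℂ] Vn n} (hg : g ∈ G) :
    g ∈ Subgroup.closure {h | h ∈ G ∧ IsPseudoreflection h} := by
  refine Subgroup.closure_mono ?_ (hG 0 g hg ⟨0, rfl, by simp⟩)
  exact fun _ h => ⟨h.1, h.2.2⟩

theorem apply_mem_span_rat_of_isIdempotentElem {n : ℕ} {Λ : AddSubgroup (Vn n)}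
    {G : Subgroup (Vn n ≃ₗ[ℂ] Vn n)} [Fintype G] (hGΛ : ∀ g ∈ G, ∀ v ∈ Λ, g v ∈ Λ)
    (hsmooth : SmoothQuotient Λ (G : Set (Vn n ≃ₗ[ℂ] Vn n)))
    (hsum : ∀ x, ∑ g : G, (g : Vn n ≃ₗ[ℂ] Vn n) x = 0)
    {p : Module.End ℂ (Vn n)} (hp : IsIdempotentElem p)
    (hpG : ∀ g ∈ G, Commute p (g : Module.End ℂ (Vn n))) {l : Vn n} (hl : l ∈ Λ) :
    p l ∈ Submodule.span ℚ (Λ : Set (Vn n)) := by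
  set L := Submodule.span ℚ (Λ : Set (Vn n))
  let S : Submodule ℚ (Vn n) := L ⊓ L.comap (p.restrictScalars ℚ)
  have hrefl : ∀ g ∈ {h | h ∈ G ∧ IsPseudoreflection h}, ∀ x ∈ Λ,
      x - g • x ∈ S.toAddSubgroup := by
    rintro g ⟨hg, hgr⟩ x hx
    have hgx : x - g x ∈ L := Submodule.subset_span (Λ.sub_mem hx (hGΛ g hg x hx))
    have hpgx : p (x - g x) = (p * (1 - (g : Module.End ℂ (Vn n)))) x := rfl
    refine ⟨hgx, show p (x - g x) ∈ L from ?_⟩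
    rcases mul_eq_right_or_mul_eq_zero_of_finrank_range_eq_one hp
      ((Commute.one_right p).sub_right (hpG g hg)) hgr with h | h
    · rwa [hpgx, h]
    · rw [hpgx, h]
      exact L.zero_mem
  have hG : ∀ g ∈ G, ∀ x ∈ Λ, x - g x ∈ S := fun g hg =>
    sub_smul_mem_of_mem_closure
      (fun k hk => hGΛ k ((Subgroup.closure_le G).2 (fun _ h => h.1) hk)) hrefl g
      (hsmooth.mem_closure_pseudoreflections hg)
  have hcard : (Fintype.card G : ℚ) • l ∈ S := by
    rw [Nat.cast_smul_eq_nsmul, ← Finset.card_univ, ← Finset.sum_const, ← sub_zero (∑ _ ∈ _, l),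
      ← hsum l, ← Finset.sum_sub_distrib]
    exact S.sum_mem fun g _ => hG g g.2 l hl
  exact ((S.smul_mem_iff (by exact_mod_cast Fintype.card_ne_zero)).1 hcard).2

theorem analytic_representation_irreducible_general {n : ℕ}
    (Λ : AddSubgroup (Vn n)) (hΛ : IsLattice Λ)
    (G : Subgroup (Vn n ≃ₗ[ℂ] Vn n)) (hGfin : Finite G) (hGnontriv : G ≠ ⊥)
    (hGΛ : ∀ g ∈ G, ∀ v ∈ Λ, g v ∈ Λ)
    (hpol : ∃ E : Vn n →ₗ[ℝ] Vn n →ₗ[ℝ] ℝ, IsNSClass Λ E ∧ GInvariantForm G E ∧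
      ∀ x : Vn n, x ≠ 0 → 0 < E ((Complex.I : ℂ) • x) x)
    (hsmooth : SmoothQuotient Λ (G : Set (Vn n ≃ₗ[ℂ] Vn n)))
    (hpic : ∃ E₀ : Vn n →ₗ[ℝ] Vn n →ₗ[ℝ] ℝ, IsNSClass Λ E₀ ∧ GInvariantForm G E₀ ∧ E₀ ≠ 0 ∧
      ∀ E : Vn n →ₗ[ℝ] Vn n →ₗ[ℝ] ℝ, IsNSClass Λ E → GInvariantForm G E →
        ∃ q : ℚ, E = (q : ℝ) • E₀) :
    ∀ W : Submodule ℂ (Vn n),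
      (∀ g ∈ G, W.map (g : Vn n →ₗ[ℂ] Vn n) ≤ W) →
      W = ⊥ ∨ W = ⊤ := by
  intro W hW
  obtain ⟨E, hE, hEG, hEpos⟩ := hpol
  obtain ⟨E₀, -, -, -, hE₀⟩ := hpic
  have := Fintype.ofFinite G
  obtain ⟨p, hp, rfl, hpG⟩ := exists_isIdempotentElem_range_eq_commute G W
    fun g hg w hw => hW g hg (Submodule.mem_map_of_mem hw)
  refine or_iff_not_imp_right.2 fun htop => ?_
  obtain ⟨w, hw, hw0⟩ := (Submodule.ne_bot_iff (LinearMap.ker p)).1 fun hker => htop (by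
    simpa [hker] using (LinearMap.IsIdempotentElem.isCompl hp).sup_eq_top)
  have hsum := sum_apply_eq_zero hΛ hGnontriv hGΛ hE₀ hE hEG hEpos
  have hpΛ : ∀ l ∈ Λ, p l ∈ Submodule.span ℚ (Λ : Set (Vn n)) := fun l hl =>
    apply_mem_span_rat_of_isIdempotentElem hGΛ hsmooth hsum hp hpG hl
  rw [eq_zero_of_commute_of_apply_eq_zero hΛ hE₀ hE hEG hEpos hpG hpΛ hw0 hw,
    LinearMap.range_zero]

/-- Let `G` be a non-trivial finite group acting on an abelian variety
`A = ℂ^n ⧸ Λ` by automorphisms fixing the origin such that `A/G` is smooth and of Picard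
number 1 (the space of `G`-invariant rational Néron–Severi classes of `A` is one-dimensional).
Then the analytic representation of `G` on `T₀(A) = ℂ^n` is irreducible. -/
theorem analytic_representation_irreducible {n : ℕ} (hn : 1 ≤ n)
    (Λ : AddSubgroup (Vn n)) (hΛ : IsLattice Λ)
    (G : Subgroup (Vn n ≃ₗ[ℂ] Vn n)) (hGfin : Finite G) (hGnontriv : G ≠ ⊥)
    (hGΛ : ∀ g ∈ G, ∀ v ∈ Λ, g v ∈ Λ)
    (hpol : ∃ E : Vn n →ₗ[ℝ] Vn n →ₗ[ℝ] ℝ, IsNSClass Λ E ∧ GInvariantForm G E ∧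
      ∀ x : Vn n, x ≠ 0 → 0 < E ((Complex.I : ℂ) • x) x)
    (hsmooth : SmoothQuotient Λ (G : Set (Vn n ≃ₗ[ℂ] Vn n)))
    (hpic : ∃ E₀ : Vn n →ₗ[ℝ] Vn n →ₗ[ℝ] ℝ, IsNSClass Λ E₀ ∧ GInvariantForm G E₀ ∧ E₀ ≠ 0 ∧
      ∀ E : Vn n →ₗ[ℝ] Vn n →ₗ[ℝ] ℝ, IsNSClass Λ E → GInvariantForm G E →
        ∃ q : ℚ, E = (q : ℝ) • E₀) :
    ∀ W : Submodule ℂ (Vn n),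
      (∀ g ∈ G, W.map (g : Vn n →ₗ[ℂ] Vn n) ≤ W) →
      W = ⊥ ∨ W = ⊤ :=
  analytic_representation_irreducible_general Λ hΛ G hGfin hGnontriv hGΛ hpol hsmooth hpic
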